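/- arXiv:2302.14618 — 2 statements merged into one kernel-verified Lean document; each statement's English description precedes it below -/
import Mathlib

section
/- For positive definite matrices A and B and t ∈ [0,1], the Bures-Wasserstein geodesic point A◇_t B := (1-t)²A + t²B + t(1-t)[(AB)^{1/2} + (BA)^{1/2}] equals |(1-t)A^{1/2} + tU*B^{1/2}|², where U is the unitary from the polar decomposition B^{1/2}A^{1/2} = U(A^{1/2}BA^{1/2})^{1/2} and |X|² = X*X. -/
open Matrix Filter Asymptotics
open scoped ComplexOrder

/-- The PSD square root of a matrix (0 if not PSD). -/
noncomputable def msqrt {n : ℕ} (M : Matrix (Fin n) (Fin n) ℂ) : Matrix (Fin n) (Fin n) ℂ :=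
  letI := Classical.propDecidable M.PosSemidef
  if h : M.PosSemidef then
    h.1.eigenvectorUnitary.1 * diagonal ((↑) ∘ (√·) ∘ h.1.eigenvalues) *
      (star h.1.eigenvectorUnitary : Matrix (Fin n) (Fin n) ℂ) else 0

/-- `(AB)^{1/2} := A^{1/2} (A^{1/2} B A^{1/2})^{1/2} A^{-1/2}`. -/
noncomputable def sqAB {n : ℕ} (A B : Matrix (Fin n) (Fin n) ℂ) : Matrix (Fin n) (Fin n) ℂ :=
  msqrt A * msqrt (msqrt A * B * msqrt A) * (msqrt A)⁻¹

/-- Bures-Wasserstein geodesic `A ◇_t B`. -/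
noncomputable def geo {n : ℕ} (A B : Matrix (Fin n) (Fin n) ℂ) (t : ℝ) : Matrix (Fin n) (Fin n) ℂ :=
  ((1 - t)^2 : ℝ) • A + (t^2 : ℝ) • B + (t * (1 - t) : ℝ) • (sqAB A B + (sqAB A B)ᴴ)

/-- Bures-Wasserstein distance. -/
noncomputable def dBW {n : ℕ} (A B : Matrix (Fin n) (Fin n) ℂ) : ℝ :=
  Real.sqrt ((Matrix.trace A).re + (Matrix.trace B).re -
    2 * (Matrix.trace (msqrt (msqrt A * B * msqrt A))).re)

/-! Write `a = A^{1/2}` and `X = U* B^{1/2}`. The polar decomposition gives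
`(A^{1/2} B A^{1/2})^{1/2} = X a`, hence `(AB)^{1/2} = a X a a⁻¹ = a X`, while `X* X = B` because
`U` is unitary. Expanding `((1-t) a + t X)* ((1-t) a + t X)` with `a* = a` and `a a = A` yields the
geodesic formula term by term. -/

open scoped MatrixOrder

lemma msqrt_eq_sqrt {n : ℕ} {M : Matrix (Fin n) (Fin n) ℂ} (hM : M.PosSemidef) :
    msqrt M = CFC.sqrt M := by
  have : 0 ≤ M := nonneg_iff_posSemidef.mpr hM
  rw [CFC.sqrt_eq_cfc, cfc_nnreal_eq_real _ M, hM.1.cfc_eq, msqrt, dif_pos hM, IsHermitian.cfc,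
    Unitary.conjStarAlgAut_apply]
  congr 3
  funext i
  simp [hM.eigenvalues_nonneg i]

lemma msqrt_mul_self {n : ℕ} {M : Matrix (Fin n) (Fin n) ℂ} (hM : M.PosSemidef) :
    msqrt M * msqrt M = M := by
  rw [msqrt_eq_sqrt hM]
  exact CFC.sqrt_mul_sqrt_self M (nonneg_iff_posSemidef.mpr hM)

lemma conjTranspose_msqrt {n : ℕ} {M : Matrix (Fin n) (Fin n) ℂ} (hM : M.PosSemidef) :
    (msqrt M)ᴴ = msqrt M := by
  rw [msqrt_eq_sqrt hM]
  exact (CFC.sqrt_nonneg M).isSelfAdjoint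

lemma isUnit_msqrt {n : ℕ} {M : Matrix (Fin n) (Fin n) ℂ} (hM : M.PosDef) : IsUnit (msqrt M) :=
  isUnit_of_mul_isUnit_left (x := msqrt M) (msqrt_mul_self hM.posSemidef ▸ hM.isUnit)

lemma star_smul_add_smul_mul_self {R : Type*} [Ring R] [StarRing R] [Algebra ℝ R] [StarModule ℝ R]
    (s t : ℝ) {a x : R} (ha : star a = a) :
    star (s • a + t • x) * (s • a + t • x) =
      s ^ 2 • (a * a) + t ^ 2 • (star x * x) + (s * t) • (a * x + star (a * x)) := by
  simp only [star_add, star_smul, star_trivial, ha, star_mul, add_mul, mul_add, smul_mul_smul_comm]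
  module

lemma sqAB_eq_of_polar {n : ℕ} {A B U : Matrix (Fin n) (Fin n) ℂ} (hA : A.PosDef)
    (hU : U ∈ unitaryGroup (Fin n) ℂ)
    (hpolar : msqrt B * msqrt A = U * msqrt (msqrt A * B * msqrt A)) :
    sqAB A B = msqrt A * (Uᴴ * msqrt B) := by
  have hC : msqrt (msqrt A * B * msqrt A) = Uᴴ * (msqrt B * msqrt A) := by
    rw [hpolar, ← mul_assoc, ← star_eq_conjTranspose, Unitary.star_mul_self_of_mem hU, one_mul]
  rw [sqAB, hC, ← mul_assoc, ← mul_assoc, mul_nonsing_inv_cancel_right _ _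
    ((isUnit_iff_isUnit_det _).mp (isUnit_msqrt hA)), mul_assoc]

theorem stmt2_general {n : ℕ} (A B U : Matrix (Fin n) (Fin n) ℂ)
    (hA : A.PosDef) (hB : B.PosDef) (hU : U ∈ Matrix.unitaryGroup (Fin n) ℂ)
    (hpolar : msqrt B * msqrt A = U * msqrt (msqrt A * B * msqrt A))
    (t : ℝ) :
    geo A B t =
      ((1 - t) • msqrt A + t • (Uᴴ * msqrt B))ᴴ *
        ((1 - t) • msqrt A + t • (Uᴴ * msqrt B)) := by
  have hX : (Uᴴ * msqrt B)ᴴ * (Uᴴ * msqrt B) = B := by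
    rw [conjTranspose_mul, conjTranspose_conjTranspose, conjTranspose_msqrt hB.posSemidef,
      mul_assoc, ← mul_assoc U, ← star_eq_conjTranspose, Unitary.mul_star_self_of_mem hU, one_mul,
      msqrt_mul_self hB.posSemidef]
  have hexpand := star_smul_add_smul_mul_self (1 - t) t (x := Uᴴ * msqrt B)
    (conjTranspose_msqrt hA.posSemidef)
  simp only [star_eq_conjTranspose] at hexpand
  rw [geo, hexpand, msqrt_mul_self hA.posSemidef, hX, sqAB_eq_of_polar hA hU hpolar, mul_comm t]

theorem stmt2 {n : ℕ} (A B U : Matrix (Fin n) (Fin n) ℂ)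
    (hA : A.PosDef) (hB : B.PosDef) (hU : U ∈ Matrix.unitaryGroup (Fin n) ℂ)
    (hpolar : msqrt B * msqrt A = U * msqrt (msqrt A * B * msqrt A))
    (t : ℝ) (ht0 : 0 ≤ t) (ht1 : t ≤ 1) :
    geo A B t =
      ((1 - t) • msqrt A + t • (Uᴴ * msqrt B))ᴴ *
        ((1 - t) • msqrt A + t • (Uᴴ * msqrt B)) :=
  stmt2_general A B U hA hB hU hpolar t
end

section
/- For positive definite A, B and r, s, t ∈ [0,1], (A◇_s B)◇_r(A◇_t B) = A◇_{(1-r)s+rt} B; i.e., the Bures-Wasserstein geodesic restricted to points between A and B is affinely reparametrizable. -/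
open Matrix Filter Asymptotics
open scoped ComplexOrder

/-!
Writing `B = T * A * T` with `T = A^{-1/2} (A^{1/2} B A^{1/2})^{1/2} A^{-1/2}` positive definite,
one gets `(A B)^{1/2} = A T`, hence `A ◇_u B = L_u A L_u` with `L_u = (1 - u) I + u T`. For
commuting `P` (positive definite) and `Q` (PSD) the same computation, applied to the transport map
`P⁻¹ Q` from `P A P` to `Q A Q`, gives `(P A P) ◇_r (Q A Q) = M A M` with `M = (1 - r) P + r Q`.
The matrices `L_s` and `L_t` commute, and `(1 - r) L_s + r L_t = L_{(1-r)s+rt}`.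
-/

open scoped MatrixOrder

section

variable {n : ℕ} {A B C P Q T : Matrix (Fin n) (Fin n) ℂ}

lemma msqrt_eq_cfcSqrt (hA : A.PosSemidef) : msqrt A = CFC.sqrt A := by
  unfold msqrt
  rw [dif_pos hA, CFC.sqrt_eq_cfc, cfc_nnreal_eq_real _ A, hA.1.cfc_eq]
  simp only [IsHermitian.cfc, Unitary.conjStarAlgAut_apply]
  congr 3
  funext i
  simp [hA.eigenvalues_nonneg i]

lemma msqrt_posSemidef (hA : A.PosSemidef) : (msqrt A).PosSemidef := by
  rw [msqrt_eq_cfcSqrt hA]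
  exact (CFC.sqrt_nonneg A).posSemidef

lemma msqrt_mul_self_s6 (hA : A.PosSemidef) : msqrt A * msqrt A = A := by
  rw [msqrt_eq_cfcSqrt hA]
  exact CFC.sqrt_mul_sqrt_self A hA.nonneg

lemma msqrt_posDef (hA : A.PosDef) : (msqrt A).PosDef := by
  rw [(msqrt_posSemidef hA.posSemidef).posDef_iff_isUnit, msqrt_eq_cfcSqrt hA.posSemidef,
    CFC.isUnit_sqrt_iff A hA.posSemidef.nonneg]
  exact hA.isUnit

lemma msqrt_sq (hA : A.PosSemidef) : msqrt (A ^ 2) = A := by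
  rw [msqrt_eq_cfcSqrt (hA.pow 2)]
  exact CFC.sqrt_sq A hA.nonneg

lemma sqAB_mul_mul_self (hC : C.PosDef) (hT : T.PosSemidef) : sqAB C (T * C * T) = C * T := by
  set S := msqrt C
  have hS : S.PosDef := msqrt_posDef hC
  have hSS : S * S = C := msqrt_mul_self_s6 hC.posSemidef
  have hSTS : (S * T * S).PosSemidef := by
    simpa [hS.1.eq] using hT.conjTranspose_mul_mul_same S
  have hsq : S * (T * C * T) * S = (S * T * S) ^ 2 := by
    rw [← hSS]; noncomm_ring
  have hSdet : IsUnit S.det := (Matrix.isUnit_iff_isUnit_det S).1 hS.isUnit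
  calc sqAB C (T * C * T) = S * (S * T * S) * S⁻¹ := by rw [sqAB, hsq, msqrt_sq hSTS]
    _ = (S * S) * T * (S * S⁻¹) := by noncomm_ring
    _ = C * T := by rw [hSS, Matrix.mul_nonsing_inv _ hSdet, mul_one]

lemma geo_mul_mul_self (hC : C.PosDef) (hT : T.PosSemidef) (r : ℝ) :
    geo C (T * C * T) r = ((1 - r) • 1 + r • T) * C * ((1 - r) • 1 + r • T) := by
  have hCT : (C * T)ᴴ = T * C := by rw [conjTranspose_mul, hC.1.eq, hT.1.eq]
  rw [geo, sqAB_mul_mul_self hC hT, hCT]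
  simp only [add_mul, mul_add, smul_mul_assoc, mul_smul_comm, one_mul, mul_one, smul_add,
    smul_smul, mul_assoc]
  module

open scoped Matrix.Norms.L2Operator in
lemma geo_mul_mul_of_commute (hC : C.PosDef) (hP : P.PosDef) (hQ : Q.PosSemidef)
    (hPQ : Commute P Q) (r : ℝ) :
    geo (P * C * P) (Q * C * Q) r = ((1 - r) • P + r • Q) * C * ((1 - r) • P + r • Q) := by
  have hPdet : IsUnit P.det := (Matrix.isUnit_iff_isUnit_det P).1 hP.isUnit
  set X := P⁻¹ * Q
  have hPX : P * X = Q := Matrix.mul_nonsing_inv_cancel_left _ _ hPdet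
  have hXP : X * P = Q := by
    rw [Matrix.mul_assoc, ← hPQ.eq, Matrix.nonsing_inv_mul_cancel_left _ _ hPdet]
  -- `X` is the transport map from `P * C * P` to `Q * C * Q`; it is PSD as `P⁻¹` and `Q` commute.
  have hX : X.PosSemidef := by
    refine (Commute.mul_nonneg hP.inv.posSemidef.nonneg hQ.nonneg ?_).posSemidef
    obtain ⟨u, rfl⟩ := hP.isUnit
    rw [← Matrix.coe_units_inv]
    exact hPQ.units_inv_left
  have hPCP : (P * C * P).PosDef := by
    simpa [hP.1.eq] using hC.conjTranspose_mul_mul_same (mulVec_injective_of_isUnit hP.isUnit)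
  have hXPCPX : X * (P * C * P) * X = Q * C * Q := by
    simp only [← Matrix.mul_assoc, hXP]; simp only [Matrix.mul_assoc, hPX]
  have hL : ((1 - r) • 1 + r • X) * P = (1 - r) • P + r • Q := by
    rw [add_mul, smul_mul_assoc, smul_mul_assoc, one_mul, hXP]
  have hR : P * ((1 - r) • 1 + r • X) = (1 - r) • P + r • Q := by
    rw [mul_add, mul_smul_comm, mul_smul_comm, mul_one, hPX]
  calc geo (P * C * P) (Q * C * Q) r
      = ((1 - r) • 1 + r • X) * (P * C * P) * ((1 - r) • 1 + r • X) := by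
        rw [← hXPCPX, geo_mul_mul_self hPCP hX]
    _ = (((1 - r) • 1 + r • X) * P) * C * (P * ((1 - r) • 1 + r • X)) := by
        simp only [Matrix.mul_assoc]
    _ = _ := by rw [hL, hR]

lemma exists_posDef_mul_mul_eq (hA : A.PosDef) (hB : B.PosDef) :
    ∃ T : Matrix (Fin n) (Fin n) ℂ, T.PosDef ∧ T * A * T = B := by
  set S := msqrt A
  have hS : S.PosDef := msqrt_posDef hA
  have hSS : S * S = A := msqrt_mul_self_s6 hA.posSemidef
  have hSdet : IsUnit S.det := (Matrix.isUnit_iff_isUnit_det S).1 hS.isUnit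
  have hSBS : (S * B * S).PosDef := by
    simpa [hS.1.eq] using hB.conjTranspose_mul_mul_same (mulVec_injective_of_isUnit hS.isUnit)
  set M := msqrt (S * B * S)
  refine ⟨S⁻¹ * M * S⁻¹, ?_, ?_⟩
  · simpa [hS.inv.1.eq] using (msqrt_posDef hSBS).conjTranspose_mul_mul_same
      (mulVec_injective_of_isUnit hS.inv.isUnit)
  · calc S⁻¹ * M * S⁻¹ * A * (S⁻¹ * M * S⁻¹)
        = S⁻¹ * M * (S⁻¹ * S) * (S * S⁻¹) * M * S⁻¹ := by rw [← hSS]; noncomm_ring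
      _ = S⁻¹ * (M * M) * S⁻¹ := by
        rw [Matrix.nonsing_inv_mul _ hSdet, Matrix.mul_nonsing_inv _ hSdet]; noncomm_ring
      _ = (S⁻¹ * S) * B * (S * S⁻¹) := by rw [msqrt_mul_self_s6 hSBS.posSemidef]; noncomm_ring
      _ = B := by rw [Matrix.nonsing_inv_mul _ hSdet, Matrix.mul_nonsing_inv _ hSdet]; noncomm_ring

lemma posDef_one_sub_smul_one_add_smul (hT : T.PosDef) {u : ℝ} (hu0 : 0 ≤ u) (hu1 : u ≤ 1) :
    ((1 - u) • 1 + u • T).PosDef := by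
  rcases hu1.lt_or_eq with hu1 | rfl
  · exact (PosDef.one.smul (sub_pos.2 hu1)).add_posSemidef (hT.posSemidef.smul hu0)
  · simpa using hT

end

theorem stmt6_general {n : ℕ} (A B : Matrix (Fin n) (Fin n) ℂ)
    (hA : A.PosDef) (hB : B.PosDef) (r s t : ℝ)
    (hs0 : 0 ≤ s) (hs1 : s ≤ 1)
    (ht0 : 0 ≤ t) (ht1 : t ≤ 1) :
    geo (geo A B s) (geo A B t) r = geo A B ((1 - r) * s + r * t) := by
  obtain ⟨T, hT, rfl⟩ := exists_posDef_mul_mul_eq hA hB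
  have hcomm : Commute ((1 - s) • 1 + s • T) ((1 - t) • 1 + t • T) := by
    simp only [Commute, SemiconjBy, add_mul, mul_add, smul_mul_smul, one_mul, mul_one]
    module
  rw [geo_mul_mul_self hA hT.posSemidef s, geo_mul_mul_self hA hT.posSemidef t,
    geo_mul_mul_of_commute hA (posDef_one_sub_smul_one_add_smul hT hs0 hs1)
      (posDef_one_sub_smul_one_add_smul hT ht0 ht1).posSemidef hcomm,
    geo_mul_mul_self hA hT.posSemidef]
  have hlerp : (1 - r) • ((1 - s) • (1 : Matrix (Fin n) (Fin n) ℂ) + s • T)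
      + r • ((1 - t) • 1 + t • T)
      = (1 - ((1 - r) * s + r * t)) • 1 + ((1 - r) * s + r * t) • T := by
    module
  rw [hlerp]

theorem stmt6 {n : ℕ} (A B : Matrix (Fin n) (Fin n) ℂ)
    (hA : A.PosDef) (hB : B.PosDef) (r s t : ℝ)
    (hr0 : 0 ≤ r) (hr1 : r ≤ 1) (hs0 : 0 ≤ s) (hs1 : s ≤ 1)
    (ht0 : 0 ≤ t) (ht1 : t ≤ 1) :
    geo (geo A B s) (geo A B t) r = geo A B ((1 - r) * s + r * t) :=
  stmt6_general A B hA hB r s t hs0 hs1 ht0 ht1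
end
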